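/- arXiv:1812.05311 — 3 statements merged into one kernel-verified Lean document; each statement's English description precedes it below -/
import Mathlib

section
/- Suppose F has characteristic 2. Then every g ∈ PSL₂(F) has a unique presentation g = (u(a)·s)^k · u(x) · h(y) with 0 ≤ k ≤ q, x ∈ F and y ∈ F\{0}: such k, x, y exist, and if (k, x, y) and (k', x', y') both present g in this form then k = k', x = x' and y = y'. -/
/-!
In characteristic 2 the centre of `SL₂(F)` is trivial, so `PSL₂(F) = SL₂(F)`, and
`m = u(a) s = [[a, 1], [1, 0]]`. Let `SL₂(F)` act on the projective line `ℙ¹(F)`: the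
stabiliser of `∞ = [1 : 0]` consists exactly of the products `u(x) h(y)`, and the first column
of `m^k` is `(α_k, α_{k-1})`. Binet's formula `α_{k-1} (ω - ω⁻¹) = ω^k - ω^{-k}` shows that
`α_{d-1} ≠ 0`, i.e. `m^d ∞ ≠ ∞`, for `0 < d ≤ q`, because `ω` has odd order `q + 1`. So
`m^0 ∞, …, m^q ∞` are `q + 1` distinct points, i.e. all of `ℙ¹(F)`. Hence `g ∞ = m^k ∞` for
exactly one `k ≤ q`, and then `m^{-k} g = u(x) h(y)` for unique `x, y`.
-/

open Polynomial

noncomputable section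

abbrev SL2 (F : Type*) [Field F] := Matrix.SpecialLinearGroup (Fin 2) F

abbrev PSL2 (F : Type*) [Field F] := SL2 F ⧸ Subgroup.center (SL2 F)

/-- image in `PSL₂(F)` of the matrix `[[1, x], [0, 1]]`. -/
def uu {F : Type*} [Field F] (x : F) : PSL2 F :=
  QuotientGroup.mk ⟨!![1, x; 0, 1], by simp [Matrix.det_fin_two_of]⟩

/-- image in `PSL₂(F)` of the matrix `[[y, 0], [0, y⁻¹]]`. -/
def hh {F : Type*} [Field F] (y : F) (hy : y ≠ 0) : PSL2 F :=
  QuotientGroup.mk ⟨!![y, 0; 0, y⁻¹], by simp [Matrix.det_fin_two_of, mul_inv_cancel₀ hy]⟩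

/-- image in `PSL₂(F)` of the matrix `[[0, 1], [-1, 0]]`. -/
def ss {F : Type*} [Field F] : PSL2 F :=
  QuotientGroup.mk ⟨!![0, 1; -1, 0], by simp [Matrix.det_fin_two_of]⟩

/-- the sequence `a_k`: `a₁ = a`, `a_{k+1} = a - a_k⁻¹` (with junk value `a₀ = 0`). -/
def aSeq {F : Type*} [Field F] (a : F) : ℕ → F
  | 0 => 0
  | k + 1 => a - (aSeq a k)⁻¹

/-- the sequence `b_ℓ`: `b₀ = b`, `b_{ℓ+1} = a - b_ℓ⁻¹`. -/
def bSeq {F : Type*} [Field F] (a b : F) : ℕ → F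
  | 0 => b
  | k + 1 => a - (bSeq a b k)⁻¹

/-- `alph a n = α_{n-1}(a)`, the (index-shifted) Dickson polynomial of the second
kind values: `α_{-1} = 0`, `α₀ = 1`, `α_{n+1} = a·α_n - α_{n-1}`. -/
def alph {F : Type*} [Field F] (a : F) : ℕ → F
  | 0 => 0
  | 1 => 1
  | n + 2 => a * alph a (n + 1) - alph a n

/-- `bet a b n = β_{n-1}(a,b)`: `β_{-1} = 1`, `β_n = b·α_n - α_{n-1}` for `n ≥ 0`. -/
def bet {F : Type*} [Field F] (a b : F) : ℕ → F
  | 0 => 1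
  | n + 1 => b * alph a (n + 1) - alph a n

/-- `gam a b n = γ_{n-1}(a,b)` where `γ_n = α_n + b·β_n`. -/
def gam {F : Type*} [Field F] (a b : F) (n : ℕ) : F := alph a n + b * bet a b n

section Dickson

variable {F : Type*} [Field F]

lemma map_alph {K : Type*} [Field K] (f : F →+* K) (a : F) (n : ℕ) :
    f (alph a n) = alph (f a) n := by
  induction n using Nat.twoStepInduction with
  | zero => simp [alph]
  | one => simp [alph]
  | more n ih₀ ih₁ => simp [alph, ih₀, ih₁]

/-- Binet's formula for `α`, multiplied out: formally `α_{n-1} = (ω^n - ω^{-n}) / (ω - ω⁻¹)`. -/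
lemma alph_mul_eq_pow_sub {a ω : F} (hω : ω ^ 2 - a * ω + 1 = 0) (n : ℕ) :
    alph a n * ((ω ^ 2 - 1) * ω ^ n) = ω ^ (2 * n + 1) - ω := by
  induction n using Nat.twoStepInduction with
  | zero => simp [alph]
  | one => simp only [alph]; ring
  | more n ih₀ ih₁ =>
    simp only [alph]
    linear_combination a * ω * ih₁ - ω ^ 2 * ih₀ - (ω ^ (2 * n + 3) - ω) * hω

lemma alph_ne_zero_of_lt_orderOf {a ω : F} (hω : ω ^ 2 - a * ω + 1 = 0)
    (hodd : Odd (orderOf ω)) {n : ℕ} (hn₀ : 0 < n) (hn : n < orderOf ω) : alph a n ≠ 0 := by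
  intro hzero
  have hω₀ : ω ≠ 0 := by
    rintro rfl
    simp at hodd
  have hpow : ω ^ (2 * n) = 1 := by
    have := alph_mul_eq_pow_sub hω n
    rw [hzero, zero_mul, pow_succ, eq_comm, sub_eq_zero] at this
    exact (mul_eq_right₀ hω₀).1 this
  have hdvd : orderOf ω ∣ n :=
    (Nat.Coprime.pow_right 1 (Nat.coprime_two_right.2 hodd)).dvd_of_dvd_mul_left
      (by simpa using orderOf_dvd_of_pow_eq_one hpow)
  exact absurd (Nat.le_of_dvd hn₀ hdvd) (not_le.2 hn)

end Dickson

open scoped LinearAlgebra.Projectivization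

section OrbitCounting

variable {G X : Type*} [Group G] [MulAction G X]

lemma pow_smul_injOn_Iic (m : G) (p : X) {q : ℕ} (hm : ∀ d, 0 < d → d ≤ q → m ^ d • p ≠ p) :
    Set.InjOn (fun k ↦ m ^ k • p) (Set.Iic q) := by
  suffices h : ∀ j l, j ≤ l → l ≤ q → m ^ j • p = m ^ l • p → j = l by
    intro j hj l hl hjl
    rcases le_total j l with hle | hle
    · exact h j l hle hl hjl
    · exact (h l j hle hj hjl.symm).symm
  intro j l hle hl hjl
  obtain ⟨d, rfl⟩ := Nat.exists_eq_add_of_le hle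
  rw [pow_add, mul_smul, smul_left_cancel_iff] at hjl
  by_contra hd
  exact hm d (by omega) (by omega) hjl.symm

lemma exists_pow_smul_eq_of_card_eq [Finite X] (m : G) (p : X) {q : ℕ}
    (hcard : Nat.card X = q + 1) (hm : ∀ d, 0 < d → d ≤ q → m ^ d • p ≠ p) (x : X) :
    ∃ k ≤ q, m ^ k • p = x := by
  have hinj : Function.Injective fun k : Fin (q + 1) ↦ m ^ (k : ℕ) • p := fun j l hjl ↦
    Fin.ext (pow_smul_injOn_Iic m p hm (Nat.lt_succ_iff.1 j.2) (Nat.lt_succ_iff.1 l.2) hjl)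
  obtain ⟨k, hk⟩ := (hinj.bijective_of_nat_card_le (by simp [hcard])).2 x
  exact ⟨k, Nat.lt_succ_iff.1 k.2, hk⟩

end OrbitCounting

section SL2

variable {F : Type*} [Field F]

def uSL (x : F) : SL2 F := ⟨!![1, x; 0, 1], by simp [Matrix.det_fin_two_of]⟩

def hSL (y : F) (hy : y ≠ 0) : SL2 F :=
  ⟨!![y, 0; 0, y⁻¹], by simp [Matrix.det_fin_two_of, mul_inv_cancel₀ hy]⟩

def sSL : SL2 F := ⟨!![0, 1; -1, 0], by simp [Matrix.det_fin_two_of]⟩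

lemma coe_uSL_mul_hSL (x y : F) (hy : y ≠ 0) :
    ((uSL x * hSL y hy : SL2 F) : Matrix (Fin 2) (Fin 2) F) = !![y, x * y⁻¹; 0, y⁻¹] := by
  rw [Matrix.SpecialLinearGroup.coe_mul]
  simp [uSL, hSL]

lemma uSL_mul_hSL_inj {x x' y y' : F} {hy : y ≠ 0} {hy' : y' ≠ 0}
    (h : uSL x * hSL y hy = uSL x' * hSL y' hy') : x = x' ∧ y = y' := by
  have h := congrArg (fun g : SL2 F ↦ (g : Matrix (Fin 2) (Fin 2) F)) h
  simp only [coe_uSL_mul_hSL] at h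
  have hyy : y = y' := by simpa using congrFun (congrFun h 0) 0
  subst hyy
  exact ⟨by simpa [hy] using congrFun (congrFun h 0) 1, rfl⟩

lemma exists_eq_uSL_mul_hSL (g : SL2 F) (hg : (g : Matrix (Fin 2) (Fin 2) F) 1 0 = 0) :
    ∃ x y, ∃ hy : y ≠ 0, g = uSL x * hSL y hy := by
  have hdet : g 0 0 * g 1 1 = 1 := by
    have := Matrix.SpecialLinearGroup.det_coe g
    rwa [Matrix.det_fin_two, hg, mul_zero, sub_zero] at this
  have hy : g 0 0 ≠ 0 := left_ne_zero_of_mul_eq_one hdet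
  refine ⟨g 0 1 * g 0 0, g 0 0, hy, ?_⟩
  ext i j
  rw [coe_uSL_mul_hSL, ← eq_inv_of_mul_eq_one_right hdet, mul_assoc, hdet, mul_one]
  fin_cases i <;> fin_cases j <;> simp [hg]

variable (F) in
def ptInfty : ℙ F (Fin 2 → F) := Projectivization.mk F (Pi.single 0 1) (by simp)

lemma smul_ptInfty_eq_self_iff (g : SL2 F) :
    g • ptInfty F = ptInfty F ↔ (g : Matrix (Fin 2) (Fin 2) F) 1 0 = 0 := by
  rw [ptInfty, Projectivization.smul_mk, Projectivization.mk_eq_mk_iff']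
  simp [Matrix.SpecialLinearGroup.smul_def, funext_iff, Fin.forall_fin_two, eq_comm]

lemma uSL_mul_hSL_smul_ptInfty (x y : F) (hy : y ≠ 0) :
    (uSL x * hSL y hy) • ptInfty F = ptInfty F :=
  (smul_ptInfty_eq_self_iff _).2 (by rw [coe_uSL_mul_hSL]; simp)

lemma exists_eq_pow_mul_uSL_mul_hSL [Finite F] (m : SL2 F) {q : ℕ} (hq : Nat.card F = q)
    (hm : ∀ d, 0 < d → d ≤ q → m ^ d • ptInfty F ≠ ptInfty F) (g : SL2 F) :
    ∃ k ≤ q, ∃ x y, ∃ hy : y ≠ 0, g = m ^ k * uSL x * hSL y hy := by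
  have hcard : Nat.card (ℙ F (Fin 2 → F)) = q + 1 := by
    rw [Projectivization.card_of_finrank_two F _ (Module.finrank_fin_fun F), hq]
  obtain ⟨k, hk, hkg⟩ := exists_pow_smul_eq_of_card_eq m (ptInfty F) hcard hm (g • ptInfty F)
  have hfix : ((m ^ k)⁻¹ * g) • ptInfty F = ptInfty F := by
    rw [mul_smul, inv_smul_eq_iff, hkg]
  obtain ⟨x, y, hy, hxy⟩ := exists_eq_uSL_mul_hSL _ ((smul_ptInfty_eq_self_iff _).1 hfix)
  refine ⟨k, hk, x, y, hy, ?_⟩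
  rw [mul_assoc, ← hxy, mul_inv_cancel_left]

lemma pow_mul_uSL_mul_hSL_inj (m : SL2 F) {q : ℕ}
    (hm : ∀ d, 0 < d → d ≤ q → m ^ d • ptInfty F ≠ ptInfty F) {k k' : ℕ} {x x' y y' : F}
    {hy : y ≠ 0} {hy' : y' ≠ 0} (hk : k ≤ q) (hk' : k' ≤ q)
    (h : m ^ k * uSL x * hSL y hy = m ^ k' * uSL x' * hSL y' hy') :
    k = k' ∧ x = x' ∧ y = y' := by
  rw [mul_assoc, mul_assoc] at h
  have hkk : k = k' := pow_smul_injOn_Iic m _ hm hk hk' <| by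
    simpa only [mul_smul (m ^ _), uSL_mul_hSL_smul_ptInfty] using congrArg (· • ptInfty F) h
  subst hkk
  exact ⟨rfl, uSL_mul_hSL_inj (mul_left_cancel h)⟩

end SL2

section CharTwo

variable {F : Type*} [Field F] [CharP F 2]

lemma center_SL2_eq_bot : Subgroup.center (SL2 F) = ⊥ := by
  refine (Subgroup.eq_bot_iff_forall _).2 fun g hg ↦ ?_
  obtain ⟨r, hr, hrg⟩ := Matrix.SpecialLinearGroup.mem_center_iff.1 hg
  have hr2 : r ^ 2 = 1 := by simpa using hr
  have hr1 : r = 1 := by simpa [CharTwo.neg_eq] using sq_eq_one_iff.1 hr2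
  ext : 1
  simp [← hrg, hr1]

lemma PSL2.mk_injective :
    Function.Injective (QuotientGroup.mk : SL2 F → PSL2 F) := fun g h hgh ↦ by
  rwa [QuotientGroup.eq, center_SL2_eq_bot, Subgroup.mem_bot, inv_mul_eq_one] at hgh

lemma coe_uSL_mul_sSL (a : F) :
    ((uSL a * sSL : SL2 F) : Matrix (Fin 2) (Fin 2) F) = !![a, 1; 1, 0] := by
  rw [Matrix.SpecialLinearGroup.coe_mul]
  simp [uSL, sSL, CharTwo.neg_eq]

lemma coe_uSL_mul_sSL_pow_col_zero (a : F) (k : ℕ) :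
    ((uSL a * sSL) ^ k : SL2 F) 0 0 = alph a (k + 1) ∧
      ((uSL a * sSL) ^ k : SL2 F) 1 0 = alph a k := by
  induction k with
  | zero => simp [alph]
  | succ k ih =>
    rw [pow_succ', Matrix.SpecialLinearGroup.coe_mul, coe_uSL_mul_sSL, Matrix.mul_apply,
      Matrix.mul_apply, Fin.sum_univ_two, Fin.sum_univ_two, ih.1, ih.2]
    simp [alph, sub_eq_add_neg, CharTwo.neg_eq]

lemma uSL_mul_sSL_pow_smul_ptInfty_ne (a : F) {d : ℕ} (hd : alph a d ≠ 0) :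
    (uSL a * sSL) ^ d • ptInfty F ≠ ptInfty F := by
  rw [Ne, smul_ptInfty_eq_self_iff, (coe_uSL_mul_sSL_pow_col_zero a d).2]
  exact hd

lemma alph_ne_zero_of_orderOf_root [Fintype F] {q : ℕ} (hq : Fintype.card F = q) {a : F}
    {K : Type*} [Field K] [Algebra F K] {ω : K}
    (hroot : aeval ω (X ^ 2 + C a * X + 1 : F[X]) = 0)
    (hord : orderOf ω = q + 1) {d : ℕ} (hd₀ : 0 < d) (hd : d ≤ q) : alph a d ≠ 0 := by
  have hω : ω ^ 2 - algebraMap F K a * ω + 1 = 0 := by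
    rw [sub_eq_add_neg, ← neg_mul, ← map_neg, CharTwo.neg_eq]
    simpa using hroot
  have hq2 : 2 ∣ q := (CharP.cast_eq_zero_iff F 2 q).1 (hq ▸ FiniteField.cast_card_eq_zero F)
  have := alph_ne_zero_of_lt_orderOf hω (hord ▸ (even_iff_two_dvd.2 hq2).add_one) hd₀ (by omega)
  rwa [← map_alph, _root_.map_ne_zero] at this

end CharTwo

theorem stmt2_general (F : Type*) [Field F] [Fintype F] (q : ℕ) (hq : Fintype.card F = q)
    (hchar : ringChar F = 2)
    (a : F)
    (ω : AlgebraicClosure F) (hroot : aeval ω (X ^ 2 + C a * X + 1 : F[X]) = 0)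
    (hord : orderOf ω = q + 1) :
    ∀ g : PSL2 F,
      (∃ (k : ℕ) (x y : F) (hy : y ≠ 0), k ≤ q ∧
        g = (uu a * ss) ^ k * uu x * hh y hy) ∧
      ∀ (k k' : ℕ) (x x' y y' : F) (hy : y ≠ 0) (hy' : y' ≠ 0),
        k ≤ q → k' ≤ q →
        g = (uu a * ss) ^ k * uu x * hh y hy →
        g = (uu a * ss) ^ k' * uu x' * hh y' hy' →
        k = k' ∧ x = x' ∧ y = y' := by
  have := ringChar.of_eq hchar
  have hm : ∀ d, 0 < d → d ≤ q → (uSL a * sSL) ^ d • ptInfty F ≠ ptInfty F := fun d hd₀ hd ↦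
    uSL_mul_sSL_pow_smul_ptInfty_ne a (alph_ne_zero_of_orderOf_root hq hroot hord hd₀ hd)
  have hmk : ∀ k x y (hy : y ≠ 0), (uu a * ss) ^ k * uu x * hh y hy =
      QuotientGroup.mk ((uSL a * sSL) ^ k * uSL x * hSL y hy) := fun _ _ _ _ ↦ rfl
  intro g
  obtain ⟨G, rfl⟩ := QuotientGroup.mk_surjective g
  refine ⟨?_, fun k k' x x' y y' hy hy' hk hk' h h' ↦ ?_⟩
  · obtain ⟨k, hk, x, y, hy, rfl⟩ :=
      exists_eq_pow_mul_uSL_mul_hSL _ (Nat.card_eq_fintype_card.trans hq) hm G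
    exact ⟨k, x, y, hy, hk, (hmk k x y hy).symm⟩
  · rw [hmk, PSL2.mk_injective.eq_iff] at h h'
    exact pow_mul_uSL_mul_hSL_inj _ hm hk hk' (h.symm.trans h')

theorem stmt2 (F : Type*) [Field F] [Fintype F] (q : ℕ) (hq : Fintype.card F = q)
    (hchar : ringChar F = 2)
    (a : F) (hirr : Irreducible (X ^ 2 + C a * X + 1 : F[X]))
    (ω : AlgebraicClosure F) (hroot : aeval ω (X ^ 2 + C a * X + 1 : F[X]) = 0)
    (hord : orderOf ω = q + 1) :
    ∀ g : PSL2 F,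
      (∃ (k : ℕ) (x y : F) (hy : y ≠ 0), k ≤ q ∧
        g = (uu a * ss) ^ k * uu x * hh y hy) ∧
      ∀ (k k' : ℕ) (x x' y y' : F) (hy : y ≠ 0) (hy' : y' ≠ 0),
        k ≤ q → k' ≤ q →
        g = (uu a * ss) ^ k * uu x * hh y hy →
        g = (uu a * ss) ^ k' * uu x' * hh y' hy' →
        k = k' ∧ x = x' ∧ y = y' :=
  stmt2_general F q hq hchar a ω hroot hord

end
end

section
/- The sequence (a_k) satisfies a_{t−1} = 0. -/
/-! With `μ = -ω` and `ν = μ⁻¹` we have `a = μ + ν`, so the Dickson-type values satisfy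
`α_{n-1}(a) (μ - ν) = μⁿ - νⁿ`; hence (when `μ ≠ ν`) `α_{n-1}(a)` vanishes exactly when the order of
`μ² = ω²`, which is `t`, divides `n`. Unwinding the recursion, `a_k = α_k(a) / α_{k-1}(a)` as long as
the denominators are nonzero, so `a_{t-1} = α_{t-1}(a) / α_{t-2}(a) = 0`. -/

open Polynomial

noncomputable section

section Dickson

variable {F : Type*} [Field F] {a : F}

theorem algebraMap_alph_mul_sub {L : Type*} [CommRing L] [Algebra F L] {μ ν : L}
    (hμν : μ * ν = 1) (ha : algebraMap F L a = μ + ν) (n : ℕ) :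
    algebraMap F L (alph a n) * (μ - ν) = μ ^ n - ν ^ n := by
  induction n using Nat.twoStepInduction with
  | zero => simp [alph]
  | one => simp [alph]
  | more n ih₀ ih₁ =>
    rw [alph, map_sub, map_mul, ha]
    linear_combination (μ + ν) * ih₁ - ih₀ + (μ ^ n - ν ^ n) * hμν

theorem alph_eq_zero_iff {L : Type*} [Field L] [Algebra F L] {μ ν : L}
    (hμν : μ * ν = 1) (hμ : μ ^ 2 ≠ 1) (ha : algebraMap F L a = μ + ν) (n : ℕ) :
    alph a n = 0 ↔ orderOf (μ ^ 2) ∣ n := by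
  have hne : μ - ν ≠ 0 := fun h => hμ (by rw [sq]; nth_rw 2 [sub_eq_zero.1 h]; exact hμν)
  have hμn : μ ^ n ≠ 0 := pow_ne_zero n (left_ne_zero_of_mul_eq_one hμν)
  rw [orderOf_dvd_iff_pow_eq_one, ← pow_mul, mul_comm, pow_mul, ← (algebraMap F L).injective.eq_iff,
    map_zero, ← mul_left_inj' hne, algebraMap_alph_mul_sub hμν ha, zero_mul, sub_eq_zero]
  have hprod : μ ^ n * ν ^ n = 1 := by rw [← mul_pow, hμν, one_pow]
  constructor
  · intro h
    rw [sq, ← hprod, h]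
  · intro h
    exact mul_left_cancel₀ hμn (by rw [hprod, ← sq, h])

theorem aSeq_eq_alph_div {m : ℕ} (h : ∀ j < m, alph a (j + 1) ≠ 0) :
    aSeq a m = alph a (m + 1) / alph a m := by
  induction m with
  | zero => simp [aSeq, alph]
  | succ m ih =>
    rw [aSeq, ih fun j hj => h j (by omega), inv_div, alph]
    field_simp [h m (by omega)]

theorem aSeq_pred_eq_zero {n : ℕ} (hn : alph a n = 0)
    (h : ∀ j, 0 < j → j < n → alph a j ≠ 0) : aSeq a (n - 1) = 0 := by
  cases n with
  | zero => rfl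
  | succ m =>
    rw [Nat.add_sub_cancel, aSeq_eq_alph_div fun j hj => h (j + 1) j.succ_pos (by omega), hn,
      zero_div]

theorem aSeq_orderOf_sq_sub_one_eq_zero {L : Type*} [Field L] [Algebra F L] {μ ν : L}
    (hμν : μ * ν = 1) (ha : algebraMap F L a = μ + ν) : aSeq a (orderOf (μ ^ 2) - 1) = 0 := by
  by_cases hμ : μ ^ 2 = 1
  · rw [hμ, orderOf_one]
    rfl
  refine aSeq_pred_eq_zero ((alph_eq_zero_iff hμν hμ ha _).2 dvd_rfl) fun j hj hjt hj0 => ?_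
  exact (Nat.le_of_dvd hj ((alph_eq_zero_iff hμν hμ ha j).1 hj0)).not_gt hjt

end Dickson

theorem stmt7_general (F : Type*) [Field F] (q : ℕ)
    (a : F)
    (ω : AlgebraicClosure F) (hroot : aeval ω (X ^ 2 + C a * X + 1 : F[X]) = 0)
    (hord : orderOf ω = q + 1) (t : ℕ) (ht : t = (q + 1) / Nat.gcd 2 (q + 1)) :
    aSeq a (t - 1) = 0 := by
  have hroot' : ω ^ 2 + algebraMap F _ a * ω + 1 = 0 := by simpa using hroot
  have hω : ω ≠ 0 := by
    rintro rfl
    simp at hroot'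
  have hμν : -ω * -ω⁻¹ = 1 := by rw [neg_mul_neg, mul_inv_cancel₀ hω]
  have ha : algebraMap F _ a = -ω + -ω⁻¹ := by
    field_simp
    linear_combination hroot'
  have hto : orderOf ((-ω) ^ 2) = t := by
    rw [neg_sq, orderOf_pow' ω two_ne_zero, hord, ht, Nat.gcd_comm]
  rw [← hto]
  exact aSeq_orderOf_sq_sub_one_eq_zero hμν ha

theorem stmt7 (F : Type*) [Field F] [Fintype F] (q : ℕ) (hq : Fintype.card F = q)
    (a : F) (hirr : Irreducible (X ^ 2 + C a * X + 1 : F[X]))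
    (ω : AlgebraicClosure F) (hroot : aeval ω (X ^ 2 + C a * X + 1 : F[X]) = 0)
    (hord : orderOf ω = q + 1) (t : ℕ) (ht : t = (q + 1) / Nat.gcd 2 (q + 1)) :
    aSeq a (t - 1) = 0 :=
  stmt7_general F q a ω hroot hord t ht
end
end

section
/- For every 1 ≤ k ≤ t−1 one has a_k = α_k(a)·α_{k−1}(a)⁻¹ and α_k(a) = a₁·a₂⋯a_k (the product of the first k terms of the sequence (a_k)). -/
open Polynomial

noncomputable section

/-! Write `a = s + s⁻¹` with `s = -ω`. Then `(s - s⁻¹) · alph a n = sⁿ - s⁻ⁿ`, so `alph a n = 0`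
forces `(s²)ⁿ = 1`; since `s² = ω²` has order `(q + 1) / gcd(q + 1, 2) = t`, the values
`alph a 1, …, alph a (t - 1)` are nonzero. As long as they are, the recursion
`a_{k+1} = a - a_k⁻¹` is the recursion of the quotients `alph a (k + 1) / alph a k`, and the
product of these quotients telescopes. -/

section Dickson

variable {F : Type*} [Field F] {a : F}

theorem alph_add_two (n : ℕ) : alph a (n + 2) = a * alph a (n + 1) - alph a n := rfl

theorem sub_inv_mul_alph_eq {K : Type*} [Field K] [Algebra F K] {s : K} (hs : s ≠ 0)
    (ha : algebraMap F K a = s + s⁻¹) (n : ℕ) :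
    (s - s⁻¹) * algebraMap F K (alph a n) = s ^ n - s⁻¹ ^ n := by
  induction n using Nat.twoStepInduction with
  | zero => simp [alph]
  | one => simp [alph]
  | more n ih ih' =>
    rw [alph_add_two, map_sub, map_mul, ha]
    linear_combination (s + s⁻¹) * ih' - ih + (s ^ n - s⁻¹ ^ n) * mul_inv_cancel₀ hs

theorem alph_ne_zero_of_lt_orderOf_s9 {K : Type*} [Field K] [Algebra F K] {s : K} (hs : s ≠ 0)
    (ha : algebraMap F K a = s + s⁻¹) {n : ℕ} (hn₀ : 0 < n) (hn : n < orderOf (s ^ 2)) :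
    alph a n ≠ 0 := by
  intro h
  have hpow : s ^ n = s⁻¹ ^ n := by
    simpa [h, sub_eq_zero, eq_comm] using sub_inv_mul_alph_eq hs ha n
  have : (s ^ 2) ^ n = 1 := by
    rw [← pow_mul, two_mul, pow_add]
    nth_rw 2 [hpow]
    rw [← mul_pow, mul_inv_cancel₀ hs, one_pow]
  exact absurd (Nat.le_of_dvd hn₀ (orderOf_dvd_of_pow_eq_one this)) (not_le.mpr hn)

theorem aSeq_eq_alph_mul_inv {k : ℕ} (h : ∀ j, 0 < j → j ≤ k → alph a j ≠ 0) :
    aSeq a k = alph a (k + 1) * (alph a k)⁻¹ := by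
  induction k with
  | zero => simp [aSeq, alph]
  | succ k ih =>
    have hk : alph a (k + 1) ≠ 0 := h (k + 1) k.succ_pos le_rfl
    rw [aSeq, ih fun j hj hjk ↦ h j hj (hjk.trans k.le_succ), alph_add_two]
    field_simp

theorem alph_succ_eq_prod_aSeq {k : ℕ} (h : ∀ j, 0 < j → j ≤ k → alph a j ≠ 0) :
    alph a (k + 1) = ∏ i ∈ Finset.Icc 1 k, aSeq a i := by
  induction k with
  | zero => simp [alph]
  | succ k ih =>
    have hk : alph a (k + 1) ≠ 0 := h (k + 1) k.succ_pos le_rfl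
    rw [Finset.prod_Icc_succ_top (by omega), ← ih fun j hj hjk ↦ h j hj (hjk.trans k.le_succ),
      aSeq_eq_alph_mul_inv h]
    field_simp

end Dickson

theorem stmt9_general (F : Type*) [Field F] (q : ℕ)
    (a : F)
    (ω : AlgebraicClosure F) (hroot : aeval ω (X ^ 2 + C a * X + 1 : F[X]) = 0)
    (hord : orderOf ω = q + 1) (t : ℕ) (ht : t = (q + 1) / Nat.gcd 2 (q + 1)) :
    ∀ k : ℕ, 1 ≤ k → k ≤ t - 1 →
      aSeq a k = alph a (k + 1) * (alph a k)⁻¹ ∧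
      alph a (k + 1) = ∏ i ∈ Finset.Icc 1 k, aSeq a i := by
  intro k _ hkt
  have hroot' : ω ^ 2 + algebraMap F _ a * ω + 1 = 0 := by simpa using hroot
  have hω : ω ≠ 0 := by rintro rfl; simp at hroot'
  have ha : algebraMap F _ a = -ω + (-ω)⁻¹ := by
    field_simp
    linear_combination hroot'
  have horder : orderOf ((-ω) ^ 2) = t := by
    rw [neg_sq, orderOf_pow' ω two_ne_zero, hord, Nat.gcd_comm, ht]
  have hne : ∀ j, 0 < j → j ≤ k → alph a j ≠ 0 := fun j hj hjk ↦
    alph_ne_zero_of_lt_orderOf_s9 (neg_ne_zero.mpr hω) ha hj (by omega)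
  exact ⟨aSeq_eq_alph_mul_inv hne, alph_succ_eq_prod_aSeq hne⟩

theorem stmt9 (F : Type*) [Field F] [Fintype F] (q : ℕ) (hq : Fintype.card F = q)
    (a : F) (hirr : Irreducible (X ^ 2 + C a * X + 1 : F[X]))
    (ω : AlgebraicClosure F) (hroot : aeval ω (X ^ 2 + C a * X + 1 : F[X]) = 0)
    (hord : orderOf ω = q + 1) (t : ℕ) (ht : t = (q + 1) / Nat.gcd 2 (q + 1)) :
    ∀ k : ℕ, 1 ≤ k → k ≤ t - 1 →
      aSeq a k = alph a (k + 1) * (alph a k)⁻¹ ∧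
      alph a (k + 1) = ∏ i ∈ Finset.Icc 1 k, aSeq a i :=
  stmt9_general F q a ω hroot hord t ht

end
end
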